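/- arXiv:2601.18561 — 5 statements merged into one kernel-verified Lean document; each statement's English description precedes it below -/
import Mathlib

section
/- Let U : ℝ → [0,∞) be a nonnegative measurable random field such that almost surely (1/L)∫_{-L/2}^{L/2} U(x) dx → E[U(0)] < ∞ as L → ∞, and such that for every u > 0 the truncated field U_u = U·1{U ≤ u} satisfies (1/L)∫_{-L/2}^{L/2} U_u dx → E[U_u(0)] almost surely. Then for any nondecreasing function f : (0,∞) → (0,∞) with f(L) → +∞, almost surely (1/L)∫_{-L/2}^{L/2} U(x)·1{U(x) > f(L)} dx → 0 as L → ∞. -/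
open MeasureTheory ENNReal Filter

/-- Absence of intermittency in the subcritical regime: if the ergodic theorem
holds for `U` (with finite mean) and for all its truncations, then the
contribution of the set `{U > f(L)}` to the spatial average vanishes. -/
theorem stmt1 {Ω : Type*} [MeasureSpace Ω] [IsProbabilityMeasure (volume : Measure Ω)]
    (U : Ω → ℝ → ℝ) (hpos : ∀ ω x, 0 ≤ U ω x)
    (hmeas : Measurable fun p : Ω × ℝ => U p.1 p.2)
    (hint : Integrable (fun ω => U ω 0) (volume : Measure Ω))
    (herg : ∀ᵐ ω ∂(volume : Measure Ω),
      Tendsto (fun L : ℝ => (1 / L) * ∫ x in (-(L / 2))..(L / 2), U ω x) atTop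
        (nhds (∫ ω, U ω 0 ∂(volume : Measure Ω))))
    (hergu : ∀ u : ℝ, 0 < u → ∀ᵐ ω ∂(volume : Measure Ω),
      Tendsto (fun L : ℝ => (1 / L) * ∫ x in (-(L / 2))..(L / 2),
          (if U ω x ≤ u then U ω x else 0)) atTop
        (nhds (∫ ω, (if U ω 0 ≤ u then U ω 0 else 0) ∂(volume : Measure Ω))))
    (f : ℝ → ℝ) (hf : Monotone f) (hfpos : ∀ L, 0 < L → 0 < f L)
    (hftop : Tendsto f atTop atTop) :
    ∀ᵐ ω ∂(volume : Measure Ω), Tendsto (fun L : ℝ => (1 / L) * ∫ x in (-(L / 2))..(L / 2),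
        (if f L < U ω x then U ω x else 0)) atTop (nhds 0) := by
  have hmeasω : ∀ ω, Measurable (U ω) := fun ω => hmeas.comp (measurable_prodMk_left)
  have hmeas0 : Measurable (fun ω => U ω 0) :=
    hmeas.comp (measurable_id.prodMk measurable_const)
  -- truncated means tend to the mean
  have hEtend : Tendsto (fun n : ℕ => ∫ ω, (if U ω 0 ≤ (n : ℝ) + 1 then U ω 0 else 0))
      atTop (nhds (∫ ω, U ω 0)) := by
    refine tendsto_integral_of_dominated_convergence (fun ω => U ω 0) ?_ hint ?_ ?_
    · intro n
      exact ((Measurable.ite (measurableSet_le hmeas0 measurable_const) hmeas0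
        measurable_const)).aestronglyMeasurable
    · intro n
      filter_upwards with ω
      rw [Real.norm_eq_abs]
      split_ifs with h
      · rw [abs_of_nonneg (hpos ω 0)]
      · rw [abs_zero]; exact hpos ω 0
    · filter_upwards with ω
      have : ∀ᶠ n : ℕ in atTop, U ω 0 = if U ω 0 ≤ (n : ℝ) + 1 then U ω 0 else 0 := by
        filter_upwards [eventually_ge_atTop ⌈U ω 0⌉₊] with n hn
        have : U ω 0 ≤ (n : ℝ) + 1 := by
          have h1 : U ω 0 ≤ (⌈U ω 0⌉₊ : ℝ) := Nat.le_ceil _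
          have h2 : ((⌈U ω 0⌉₊ : ℕ) : ℝ) ≤ (n : ℝ) := by exact_mod_cast hn
          linarith
        simp [this]
      exact tendsto_const_nhds.congr' this
  have hAll : ∀ᵐ ω ∂(volume : Measure Ω), ∀ n : ℕ,
      Tendsto (fun L : ℝ => (1 / L) * ∫ x in (-(L / 2))..(L / 2),
          (if U ω x ≤ (n : ℝ) + 1 then U ω x else 0)) atTop
        (nhds (∫ ω, (if U ω 0 ≤ (n : ℝ) + 1 then U ω 0 else 0))) :=
    ae_all_iff.mpr (fun n => hergu ((n : ℝ) + 1) (by positivity))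
  filter_upwards [herg, hAll] with ω hU hUn
  rw [NormedAddCommGroup.tendsto_nhds_zero]
  intro ε hε
  obtain ⟨n, hn⟩ : ∃ n : ℕ,
      (∫ ω, U ω 0) - (∫ ω, (if U ω 0 ≤ (n : ℝ) + 1 then U ω 0 else 0)) < ε := by
    have := (hEtend.eventually_const_lt (show (∫ ω, U ω 0) - ε < ∫ ω, U ω 0 by linarith)).exists
    obtain ⟨n, hn⟩ := this
    exact ⟨n, by linarith⟩
  have hdiff : Tendsto (fun L : ℝ =>
      (1 / L) * (∫ x in (-(L / 2))..(L / 2), U ω x) -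
      (1 / L) * ∫ x in (-(L / 2))..(L / 2), (if U ω x ≤ (n : ℝ) + 1 then U ω x else 0))
      atTop (nhds ((∫ ω, U ω 0) - ∫ ω, (if U ω 0 ≤ (n : ℝ) + 1 then U ω 0 else 0))) :=
    hU.sub (hUn n)
  filter_upwards [hdiff.eventually_lt_const hn, hftop.eventually_ge_atTop ((n : ℝ) + 1),
    eventually_gt_atTop (0 : ℝ)] with L h1 h2 h3
  set a : ℝ := -(L / 2) with ha
  set b : ℝ := L / 2 with hb
  have hab : a ≤ b := by rw [ha, hb]; linarith
  have hmeasU : Measurable (U ω) := hmeasω ω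
  have htail_meas : Measurable (fun x => if f L < U ω x then U ω x else 0) :=
    Measurable.ite (measurableSet_lt measurable_const hmeasU) hmeasU measurable_const
  have htrunc_ii : ∀ c : ℝ, 0 ≤ c →
      IntervalIntegrable (fun x => if U ω x ≤ c then U ω x else 0) volume a b := by
    intro c hc
    refine (intervalIntegrable_const (c := c)).mono_fun
      ((Measurable.ite (measurableSet_le hmeasU measurable_const) hmeasU
        measurable_const)).aestronglyMeasurable ?_
    filter_upwards with x
    rw [Real.norm_eq_abs, Real.norm_eq_abs, abs_of_nonneg hc]
    split_ifs with h
    · rw [abs_of_nonneg (hpos ω x)]; exact h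
    · rw [abs_zero]; exact hc
  have hfL : 0 < f L := hfpos L h3
  have hgpos : 0 ≤ (1 / L) * ∫ x in a..b, (if f L < U ω x then U ω x else 0) := by
    refine mul_nonneg (by positivity) (intervalIntegral.integral_nonneg hab fun x _ => ?_)
    split_ifs with h
    · exact hpos ω x
    · exact le_refl 0
  have key : (1 / L) * (∫ x in a..b, (if f L < U ω x then U ω x else 0)) < ε := by
    by_cases hI : IntervalIntegrable (U ω) volume a b
    · have heq : (fun x => if f L < U ω x then U ω x else 0) =
          fun x => U ω x - (if U ω x ≤ f L then U ω x else 0) := by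
        funext x
        by_cases h : U ω x ≤ f L
        · simp [h, not_lt.mpr h]
        · simp [h, not_le.mp h]
      have hint2 := htrunc_ii (f L) hfL.le
      have hsub : (∫ x in a..b, (if f L < U ω x then U ω x else 0)) =
          (∫ x in a..b, U ω x) - ∫ x in a..b, (if U ω x ≤ f L then U ω x else 0) := by
        rw [heq, intervalIntegral.integral_sub hI hint2]
      have hmono : (∫ x in a..b, (if U ω x ≤ (n : ℝ) + 1 then U ω x else 0)) ≤
          ∫ x in a..b, (if U ω x ≤ f L then U ω x else 0) := by
        refine intervalIntegral.integral_mono_on hab (htrunc_ii _ (by positivity)) hint2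
          fun x _ => ?_
        by_cases h : U ω x ≤ (n : ℝ) + 1
        · have h' : U ω x ≤ f L := h.trans h2
          simp [h, h']
        · simp only [if_neg h]
          split_ifs with h''
          · exact hpos ω x
          · exact le_refl 0
      calc (1 / L) * (∫ x in a..b, (if f L < U ω x then U ω x else 0))
          = (1 / L) * (∫ x in a..b, U ω x) -
            (1 / L) * ∫ x in a..b, (if U ω x ≤ f L then U ω x else 0) := by
            rw [hsub, mul_sub]
        _ ≤ (1 / L) * (∫ x in a..b, U ω x) -
            (1 / L) * ∫ x in a..b, (if U ω x ≤ (n : ℝ) + 1 then U ω x else 0) := by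
            have h1L : (0 : ℝ) ≤ 1 / L := by positivity
            nlinarith [mul_le_mul_of_nonneg_left hmono h1L]
        _ < ε := h1
    · have hnotint : ¬ IntervalIntegrable (fun x => if f L < U ω x then U ω x else 0)
          volume a b := by
        intro h
        apply hI
        have heq : U ω = fun x => (if f L < U ω x then U ω x else 0) +
            (if U ω x ≤ f L then U ω x else 0) := by
          funext x
          by_cases h' : U ω x ≤ f L
          · simp [h', not_lt.mpr h']
          · simp [h', not_le.mp h']
        rw [heq]
        exact h.add (htrunc_ii (f L) hfL.le)
      rw [intervalIntegral.integral_undef hnotint, mul_zero]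
      exact hε
  rw [Real.norm_eq_abs, abs_of_nonneg hgpos]
  exact key
end

section
/- Let B be a measurable space of paths with a probability measure P_W, and let μ₁ : B → [0,∞) be measurable with μ_max = sup_{x ∈ B} μ₁[x] < ∞. Define, for g > 0, A[x; g] ∈ [0,∞] with the properties: A[x; g] ≤ exp(gT/(1 − 2gμ₁[x])) whenever 2gμ₁[x] < 1, and A[x; g] = +∞ whenever 2gμ₁[x] ≥ 1. Suppose further that for every ε > 0 the set {x ∈ B : μ₁[x] ≥ μ_max − ε} has strictly positive P_W-measure. Then g_c := inf{ g > 0 : ∫_B A[x; g] dP_W(x) = +∞ } equals 1/(2 μ_max). -/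
/-!
Below `1/(2 μ_max)` the bound on `A[x; g]` is uniform in `x`, because `μ₁ ≤ μ_max`, so the
average over the probability measure is finite. Above it, `2 g μ₁[x] ≥ 1` on a set of points
with `μ₁` close to `μ_max`, which has positive measure, so `A = ∞` there and the average diverges.
-/

open MeasureTheory ENNReal Filter

theorem csInf_eq_of_Ioi_subset_of_subset_Ici {S : Set ℝ} {c : ℝ}
    (hIoi : Set.Ioi c ⊆ S) (hIci : S ⊆ Set.Ici c) : sInf S = c := by
  refine le_antisymm ?_ (le_csInf ((Set.nonempty_Ioi).mono hIoi) hIci)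
  calc sInf S ≤ sInf (Set.Ioi c) := csInf_le_csInf ⟨c, hIci⟩ Set.nonempty_Ioi hIoi
    _ = c := csInf_Ioi

theorem MeasureTheory.lintegral_eq_top_of_eq_top_on {α : Type*} [MeasurableSpace α]
    {μ : Measure α} {f : α → ℝ≥0∞} {s : Set α} (hs : MeasurableSet s) (hμs : μ s ≠ 0)
    (hf : ∀ x ∈ s, f x = ⊤) : ∫⁻ x, f x ∂μ = ⊤ := by
  have hset : ∫⁻ x in s, f x ∂μ = ⊤ := by
    rw [setLIntegral_congr_fun hs hf, setLIntegral_const, top_mul hμs]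
  exact eq_top_iff.mpr (hset ▸ setLIntegral_le_lintegral s f)

theorem MeasureTheory.lintegral_ne_top_of_le_const {α : Type*} [MeasurableSpace α]
    {μ : Measure α} [IsFiniteMeasure μ] {f : α → ℝ≥0∞} {C : ℝ≥0∞} (hC : C ≠ ⊤)
    (hf : ∀ x, f x ≤ C) : ∫⁻ x, f x ∂μ ≠ ⊤ :=
  ((lintegral_mono hf).trans_lt (lintegral_const_lt_top hC)).ne

section Threshold

variable {μmax g : ℝ}

theorem one_le_two_mul_mul_of_one_div_le {y : ℝ} (hg : 0 < g) (hy : 1 / (2 * g) ≤ y) :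
    1 ≤ 2 * g * y := by
  rw [div_le_iff₀ (by positivity)] at hy
  linarith

theorem sub_one_div_two_mul_pos (hg : 0 < g) (hgc : 1 / (2 * μmax) < g) (hμmax : 0 < μmax) :
    0 < μmax - 1 / (2 * g) := by
  rw [div_lt_iff₀ (by positivity)] at hgc
  rw [sub_pos, div_lt_iff₀ (by positivity)]
  linarith

theorem two_mul_mul_lt_one (hg : g < 1 / (2 * μmax)) (hμmax : 0 < μmax) :
    2 * g * μmax < 1 := by
  rw [lt_div_iff₀ (by positivity)] at hg
  linarith

end Threshold

theorem stmt9_general {B : Type*} [MeasurableSpace B] (PW : Measure B)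
    [IsProbabilityMeasure PW] (T : ℝ) (hT : 0 < T)
    (μ₁ : B → ℝ) (hμ₁meas : Measurable μ₁)
    (μmax : ℝ) (hμmax : IsLUB (Set.range μ₁) μmax) (hμmaxpos : 0 < μmax)
    (A : B → ℝ → ℝ≥0∞)
    (hAfin : ∀ x g, 0 < g → 2 * g * μ₁ x < 1 →
      A x g ≤ ENNReal.ofReal (Real.exp (g * T / (1 - 2 * g * μ₁ x))))
    (hAinf : ∀ x g, 0 < g → 1 ≤ 2 * g * μ₁ x → A x g = ⊤)
    (hnearmax : ∀ ε : ℝ, 0 < ε → 0 < PW {x | μmax - ε ≤ μ₁ x}) :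
    sInf {g : ℝ | 0 < g ∧ ∫⁻ x, A x g ∂PW = ⊤} = 1 / (2 * μmax) := by
  have hle : ∀ x, μ₁ x ≤ μmax := fun x => hμmax.1 ⟨x, rfl⟩
  apply csInf_eq_of_Ioi_subset_of_subset_Ici
  · intro g (hg : 1 / (2 * μmax) < g)
    have hg0 : 0 < g := (by positivity : (0 : ℝ) < 1 / (2 * μmax)).trans hg
    refine ⟨hg0, lintegral_eq_top_of_eq_top_on (measurableSet_le measurable_const hμ₁meas)
      (hnearmax _ (sub_one_div_two_mul_pos hg0 hg hμmaxpos)).ne' fun x hx => ?_⟩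
    have hx' : 1 / (2 * g) ≤ μ₁ x := by linarith [show μmax - (μmax - 1 / (2 * g)) ≤ μ₁ x from hx]
    exact hAinf x g hg0 (one_le_two_mul_mul_of_one_div_le hg0 hx')
  · rintro g ⟨hg0, hdiv⟩
    show 1 / (2 * μmax) ≤ g
    by_contra! hg
    have hlt := two_mul_mul_lt_one hg hμmaxpos
    refine lintegral_ne_top_of_le_const
      (ofReal_ne_top (r := Real.exp (g * T / (1 - 2 * g * μmax)))) (fun x => ?_) hdiv
    have hx : 2 * g * μ₁ x ≤ 2 * g * μmax := by gcongr; exact hle x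
    refine (hAfin x g hg0 (hx.trans_lt hlt)).trans (ofReal_le_ofReal (Real.exp_le_exp.mpr ?_))
    gcongr

/-- Abstract skeleton of Proposition 1: the critical coupling above which the
averaged amplification diverges equals `1/(2 μ_max)`. -/
theorem stmt9 {B : Type*} [MeasurableSpace B] (PW : Measure B)
    [IsProbabilityMeasure PW] (T : ℝ) (hT : 0 < T)
    (μ₁ : B → ℝ) (hμ₁meas : Measurable μ₁) (hμ₁pos : ∀ x, 0 ≤ μ₁ x)
    (μmax : ℝ) (hμmax : IsLUB (Set.range μ₁) μmax) (hμmaxpos : 0 < μmax)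
    (A : B → ℝ → ℝ≥0∞)
    (hAmono : ∀ x, Monotone (A x))
    (hAfin : ∀ x g, 0 < g → 2 * g * μ₁ x < 1 →
      A x g ≤ ENNReal.ofReal (Real.exp (g * T / (1 - 2 * g * μ₁ x))))
    (hAinf : ∀ x g, 0 < g → 1 ≤ 2 * g * μ₁ x → A x g = ⊤)
    (hnearmax : ∀ ε : ℝ, 0 < ε → 0 < PW {x | μmax - ε ≤ μ₁ x}) :
    sInf {g : ℝ | 0 < g ∧ ∫⁻ x, A x g ∂PW = ⊤} = 1 / (2 * μmax) :=
  stmt9_general PW T hT μ₁ hμ₁meas μmax hμmax hμmaxpos A hAfin hAinf hnearmax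
end

section
/- Let ψ solve the Feynman–Kac representation E(0,g) = ∫_{B(0,T)} exp( g ∫₀^T S(x(τ),τ)² dτ ) dP_W[x(·)] where P_W is a probability measure on paths and S is measurable. Let M = sup over paths x(·) in the support and times t ∈ [0,T] of S(x(t),t)², assumed finite a.s. Then E(0,g) ≤ exp(g T M). Consequently, if M has probability density p_M(m) with upper tail p_M(m) ∼ A m^{1/2} e^{−m/2} as m → ∞ for some constant A > 0, then E[E(0,g)^ε] ≤ ∫₀^∞ p_M(m) e^{ε g T m} dm < ∞ for every ε with 0 < ε < 1/(2gT). -/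
open MeasureTheory ENNReal Filter Set Asymptotics

/-!
Along every path the exponent `g ∫₀ᵀ S²` is at most `gTM`, so `E(0,g) ≤ exp(gTM)`. Hence
`E(0,g)^ε ≤ exp(εgTM)`, whose expectation is the integral of `exp(εgT m)` against the density
of `M`. That density decays like `√m e^{-m/2}`, so the integral converges once `εgT < 1/2`.
-/

theorem lintegral_ofReal_exp_mul_intervalIntegral_le {X : Type*} [MeasurableSpace X]
    (μ : Measure X) [IsProbabilityMeasure μ] {g T C : ℝ} (hg : 0 ≤ g) (hT : 0 ≤ T)
    {f : X → ℝ → ℝ} (hfC : ∀ p, ∀ τ ∈ Ioc 0 T, |f p τ| ≤ C) :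
    ∫⁻ p, ENNReal.ofReal (Real.exp (g * ∫ τ in (0 : ℝ)..T, f p τ)) ∂μ ≤
      ENNReal.ofReal (Real.exp (g * T * C)) := by
  have hbound : ∀ p, ∫ τ in (0 : ℝ)..T, f p τ ≤ T * C := fun p =>
    calc ∫ τ in (0 : ℝ)..T, f p τ ≤ ‖∫ τ in (0 : ℝ)..T, f p τ‖ := le_abs_self _
      _ ≤ C * |T - 0| :=
        intervalIntegral.norm_integral_le_of_norm_le_const fun τ hτ =>
          hfC p τ (by rwa [uIoc_of_le hT] at hτ)
      _ = T * C := by rw [sub_zero, abs_of_nonneg hT, mul_comm]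
  calc _ ≤ ∫⁻ _, ENNReal.ofReal (Real.exp (g * T * C)) ∂μ := lintegral_mono fun p =>
        ENNReal.ofReal_le_ofReal <| Real.exp_le_exp.2 <| by
          rw [mul_assoc]; exact mul_le_mul_of_nonneg_left (hbound p) hg
    _ = _ := by simp

theorem lintegral_comp_eq_setLIntegral_mul_density {Ω α : Type*} [MeasurableSpace Ω]
    [MeasurableSpace α] {μ : Measure Ω} {ν : Measure α} {M : Ω → α} (hM : Measurable M)
    {ρ : α → ℝ≥0∞} (hρ : Measurable ρ) (hlaw : μ.map M = ν.withDensity ρ) {s : Set α}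
    (hs : MeasurableSet s) (hMs : ∀ᵐ ω ∂μ, M ω ∈ s) {f : α → ℝ≥0∞} (hf : Measurable f) :
    ∫⁻ ω, f (M ω) ∂μ = ∫⁻ m in s, ρ m * f m ∂ν := by
  have hconc : (μ.map M).restrict s = μ.map M :=
    Measure.restrict_eq_self_of_ae_mem ((ae_map_iff hM.aemeasurable hs).2 hMs)
  rw [← lintegral_map hf hM, ← hconc, hlaw, restrict_withDensity hs,
    lintegral_withDensity_eq_lintegral_mul _ hρ hf]
  rfl

theorem integrable_of_map_eq_withDensity_ofReal {Ω α : Type*} [MeasurableSpace Ω]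
    [MeasurableSpace α] {μ : Measure Ω} [IsFiniteMeasure μ] {ν : Measure α} {M : Ω → α}
    {p : α → ℝ} (hp : Measurable p) (hp0 : ∀ m, 0 ≤ p m)
    (hlaw : μ.map M = ν.withDensity fun m => ENNReal.ofReal (p m)) : Integrable p ν := by
  refine ⟨hp.aestronglyMeasurable, (hasFiniteIntegral_iff_ofReal (ae_of_all _ hp0)).2 ?_⟩
  rw [← setLIntegral_univ, ← withDensity_apply _ MeasurableSet.univ, ← hlaw]
  exact measure_lt_top _ _

theorem isBigO_mul_exp_of_tendsto_div_sqrt_mul_exp {p : ℝ → ℝ} {A c : ℝ} (hc : c < 1 / 2)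
    (htail : Tendsto (fun m => p m / (A * Real.sqrt m * Real.exp (-(m / 2)))) atTop (nhds 1)) :
    (fun m => p m * Real.exp (c * m)) =O[atTop] fun m => Real.exp (-((1 / 2 - c) / 2) * m) := by
  set δ := 1 / 2 - c with hδ
  have hδ0 : 0 < δ / 2 := by linarith
  have hp : p =O[atTop] fun m => A * Real.sqrt m * Real.exp (-(m / 2)) :=
    -- the quotient tends to `1`, so the denominator is eventually nonzero
    isBigO_of_div_tendsto_nhds (by
      filter_upwards [htail.eventually_ne one_ne_zero] with m hm h0
      simp [h0] at hm) 1 htail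
  have hsqrt : (fun m => Real.sqrt m) =o[atTop] fun m => Real.exp (δ / 2 * m) := by
    simpa [Real.sqrt_eq_rpow] using isLittleO_rpow_exp_pos_mul_atTop (1 / 2) hδ0
  have hexp_neg : ∀ m, Real.exp (-(m / 2)) * Real.exp (c * m) = Real.exp (-δ * m) :=
    fun m => by rw [← Real.exp_add, hδ]; ring_nf
  have hexp_half : ∀ m, Real.exp (δ / 2 * m) * Real.exp (-δ * m) = Real.exp (-(δ / 2) * m) :=
    fun m => by rw [← Real.exp_add]; ring_nf
  calc (fun m => p m * Real.exp (c * m))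
      =O[atTop] fun m => A * Real.sqrt m * Real.exp (-(m / 2)) * Real.exp (c * m) :=
        hp.mul (isBigO_refl _ _)
    _ = fun m => A * (Real.sqrt m * Real.exp (-δ * m)) := by
        funext m; rw [← hexp_neg]; ring
    _ =O[atTop] fun m => Real.sqrt m * Real.exp (-δ * m) := isBigO_const_mul_self _ _ _
    _ =O[atTop] fun m => Real.exp (δ / 2 * m) * Real.exp (-δ * m) :=
        hsqrt.isBigO.mul (isBigO_refl _ _)
    _ = fun m => Real.exp (-(δ / 2) * m) := funext hexp_half

theorem setLIntegral_ofReal_mul_exp_lt_top {p : ℝ → ℝ} (hp : LocallyIntegrable p) {A c : ℝ}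
    (hc : c < 1 / 2)
    (htail : Tendsto (fun m => p m / (A * Real.sqrt m * Real.exp (-(m / 2)))) atTop (nhds 1)) :
    ∫⁻ m in Ioi (0 : ℝ), ENNReal.ofReal (p m * Real.exp (c * m)) < ⊤ := by
  have hdecay : IntegrableAtFilter (fun m => Real.exp (-((1 / 2 - c) / 2) * m)) atTop :=
    ⟨Ioi 0, Ioi_mem_atTop 0, exp_neg_integrableOn_Ioi 0 (by linarith)⟩
  have hint : IntegrableOn (fun m => p m * Real.exp (c * m)) (Ici 0) :=
    ((hp.mul_continuous (by fun_prop)).locallyIntegrableOn _).integrableOn_of_isBigO_atTop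
      (isBigO_mul_exp_of_tendsto_div_sqrt_mul_exp hc htail) hdecay
  exact (hint.mono_set Ioi_subset_Ici_self).lintegral_lt_top

theorem stmt13_general {Ω : Type*} [MeasureSpace Ω] [IsProbabilityMeasure (volume : Measure Ω)]
    {X : Type*} [MeasurableSpace X] (PW : Measure X) [IsProbabilityMeasure PW]
    (g T : ℝ) (hg : 0 < g) (hT : 0 < T)
    (x : X → ℝ → ℝ) (S : Ω → ℝ → ℝ → ℝ)
    (E0 : Ω → ℝ≥0∞)
    (hE0 : ∀ ω, E0 ω = ∫⁻ p, ENNReal.ofReal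
      (Real.exp (g * ∫ τ in (0 : ℝ)..T, (S ω (x p τ) τ) ^ 2)) ∂PW)
    (M : Ω → ℝ) (hMmeas : Measurable M) (hMpos : ∀ ω, 0 ≤ M ω)
    (hM : ∀ ω, ∀ p : X, ∀ τ ∈ Set.Icc (0 : ℝ) T, (S ω (x p τ) τ) ^ 2 ≤ M ω)
    (pM : ℝ → ℝ) (hpMmeas : Measurable pM) (hpMpos : ∀ m, 0 ≤ pM m)
    (hlaw : Measure.map M (volume : Measure Ω) =
      volume.withDensity fun m => ENNReal.ofReal (pM m))
    (A : ℝ)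
    (htail : Tendsto (fun m : ℝ =>
      pM m / (A * Real.sqrt m * Real.exp (-(m / 2)))) atTop (nhds 1)) :
    (∀ ω, E0 ω ≤ ENNReal.ofReal (Real.exp (g * T * M ω))) ∧
    (∀ ε : ℝ, 0 < ε → ε < 1 / (2 * g * T) →
      (∫⁻ ω, (E0 ω) ^ ε ∂(volume : Measure Ω)) ≤
        (∫⁻ m in Set.Ioi (0 : ℝ),
          ENNReal.ofReal (pM m * Real.exp (ε * g * T * m))) ∧
      (∫⁻ m in Set.Ioi (0 : ℝ),
          ENNReal.ofReal (pM m * Real.exp (ε * g * T * m))) < ⊤) := by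
  have hE0_le : ∀ ω, E0 ω ≤ ENNReal.ofReal (Real.exp (g * T * M ω)) := fun ω =>
    hE0 ω ▸ lintegral_ofReal_exp_mul_intervalIntegral_le PW hg.le hT.le fun p τ hτ => by
      rw [abs_of_nonneg (sq_nonneg _)]; exact hM ω p τ (Ioc_subset_Icc_self hτ)
  refine ⟨hE0_le, fun ε hε hεgT => ⟨?_, ?_⟩⟩
  · calc ∫⁻ ω, E0 ω ^ ε ≤ ∫⁻ ω, ENNReal.ofReal (Real.exp (g * T * M ω)) ^ ε :=
          lintegral_mono fun ω => ENNReal.rpow_le_rpow (hE0_le ω) hε.le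
      _ = ∫⁻ ω, ENNReal.ofReal (Real.exp (ε * g * T * M ω)) := lintegral_congr fun ω => by
        rw [ENNReal.ofReal_rpow_of_pos (Real.exp_pos _), ← Real.exp_mul]; ring_nf
      _ = ∫⁻ m in Ici 0, ENNReal.ofReal (pM m) * ENNReal.ofReal (Real.exp (ε * g * T * m)) :=
        lintegral_comp_eq_setLIntegral_mul_density hMmeas hpMmeas.ennreal_ofReal hlaw
          measurableSet_Ici (ae_of_all _ hMpos)
          (by fun_prop : Measurable fun m => ENNReal.ofReal (Real.exp (ε * g * T * m)))
      _ = _ := by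
        rw [setLIntegral_congr Ioi_ae_eq_Ici.symm]
        simp_rw [ENNReal.ofReal_mul (hpMpos _)]
  · have hc : ε * g * T < 1 / 2 := by
      rw [lt_div_iff₀ (by positivity)] at hεgT; nlinarith
    exact setLIntegral_ofReal_mul_exp_lt_top
      (integrable_of_map_eq_withDensity_ofReal hpMmeas hpMpos hlaw).locallyIntegrable hc htail

/-- Lemma 2 combined with equation (52): the Feynman–Kac solution is bounded by
`exp(gTM)` where `M` is the supremum of `S²` along paths, and if `M` has a pdf
with tail `A m^(1/2) e^(-m/2)`, then all fractional moments of order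
`ε < 1/(2gT)` are finite. -/
theorem stmt13 {Ω : Type*} [MeasureSpace Ω] [IsProbabilityMeasure (volume : Measure Ω)]
    {X : Type*} [MeasurableSpace X] (PW : Measure X) [IsProbabilityMeasure PW]
    (g T : ℝ) (hg : 0 < g) (hT : 0 < T)
    (x : X → ℝ → ℝ) (S : Ω → ℝ → ℝ → ℝ)
    (E0 : Ω → ℝ≥0∞)
    (hE0 : ∀ ω, E0 ω = ∫⁻ p, ENNReal.ofReal
      (Real.exp (g * ∫ τ in (0 : ℝ)..T, (S ω (x p τ) τ) ^ 2)) ∂PW)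
    (M : Ω → ℝ) (hMmeas : Measurable M) (hMpos : ∀ ω, 0 ≤ M ω)
    (hM : ∀ ω, ∀ p : X, ∀ τ ∈ Set.Icc (0 : ℝ) T, (S ω (x p τ) τ) ^ 2 ≤ M ω)
    (pM : ℝ → ℝ) (hpMmeas : Measurable pM) (hpMpos : ∀ m, 0 ≤ pM m)
    (hlaw : Measure.map M (volume : Measure Ω) =
      volume.withDensity fun m => ENNReal.ofReal (pM m))
    (A : ℝ) (hA : 0 < A)
    (htail : Tendsto (fun m : ℝ =>
      pM m / (A * Real.sqrt m * Real.exp (-(m / 2)))) atTop (nhds 1)) :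
    (∀ ω, E0 ω ≤ ENNReal.ofReal (Real.exp (g * T * M ω))) ∧
    (∀ ε : ℝ, 0 < ε → ε < 1 / (2 * g * T) →
      (∫⁻ ω, (E0 ω) ^ ε ∂(volume : Measure Ω)) ≤
        (∫⁻ m in Set.Ioi (0 : ℝ),
          ENNReal.ofReal (pM m * Real.exp (ε * g * T * m))) ∧
      (∫⁻ m in Set.Ioi (0 : ℝ),
          ENNReal.ofReal (pM m * Real.exp (ε * g * T * m))) < ⊤) :=
  stmt13_general PW g T hg hT x S E0 hE0 M hMmeas hMpos hM pM hpMmeas hpMpos hlaw A htail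
end

section
/- Let T > 0 and define for r > 0 the series p_R(r) = (πT/r³) ∑_{k=0}^{∞} (−1)^k (2k+1) exp(−(2k+1)² π² T / (8r²)). Then p_R(r) admits the alternative representation p_R(r) = 2√(2/(πT)) ∑_{m=−∞}^{∞} (−1)^{m+1} (m − 1/2) exp(−(m − 1/2)² 2r²/T). -/
open Real HurwitzZeta

private lemma hasSum_int_even_add_odd {f : ℤ → ℝ} {a b : ℝ}
    (he : HasSum (fun n : ℤ ↦ f (2 * n)) a) (ho : HasSum (fun n : ℤ ↦ f (2 * n + 1)) b) :
    HasSum f (a + b) := by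
  have h2 : Function.Injective (fun n : ℤ ↦ 2 * n) := fun x y h ↦ by dsimp at h; omega
  have h3 : Function.Injective (fun n : ℤ ↦ 2 * n + 1) := fun x y h ↦ by dsimp at h; omega
  have he' := h2.hasSum_range_iff.2 he
  have ho' := h3.hasSum_range_iff.2 ho
  have hre : Set.range (fun n : ℤ ↦ 2 * n) = {n : ℤ | Even n} := by
    ext m
    constructor
    · rintro ⟨y, rfl⟩; exact ⟨y, by ring⟩
    · rintro ⟨y, rfl⟩; exact ⟨y, by ring⟩
  have hro : Set.range (fun n : ℤ ↦ 2 * n + 1) = {n : ℤ | Odd n} := by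
    ext m
    constructor
    · rintro ⟨y, rfl⟩; exact ⟨y, by ring⟩
    · rintro ⟨y, rfl⟩; exact ⟨y, by ring⟩
  rw [hre] at he'
  rw [hro] at ho'
  exact HasSum.add_isCompl Int.isCompl_even_odd he' ho'

/-- Poisson resummation identity for the density of the maximum of the
absolute value of a Brownian path (equations (44)–(45) of the paper). -/
theorem stmt14 (T : ℝ) (hT : 0 < T) (r : ℝ) (hr : 0 < r) :
    (π * T / r ^ 3) * ∑' k : ℕ, (-1 : ℝ) ^ k * (2 * k + 1) *
        Real.exp (-((2 * k + 1) ^ 2 * π ^ 2 * T / (8 * r ^ 2))) =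
    2 * Real.sqrt (2 / (π * T)) * ∑' m : ℤ, (-1 : ℝ) ^ (m + 1) *
        ((m : ℝ) - 1 / 2) * Real.exp (-(((m : ℝ) - 1 / 2) ^ 2 * 2 * r ^ 2 / T)) := by
  have hπ := Real.pi_pos
  have hπT : (0:ℝ) < π * T := by positivity
  have ht : 0 < π * T / (8 * r ^ 2) := by positivity
  have hx : 0 < 8 * r ^ 2 / (π * T) := by positivity
  set t : ℝ := π * T / (8 * r ^ 2) with ht_def
  set x : ℝ := 8 * r ^ 2 / (π * T) with hx_def
  -- The left-hand side sum equals `sinKernel (1/4) t / 2`.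
  have hL : HasSum (fun k : ℕ ↦ 2 * ((-1 : ℝ) ^ k * (2 * k + 1) *
      Real.exp (-((2 * k + 1) ^ 2 * π ^ 2 * T / (8 * r ^ 2)))))
      (sinKernel (↑((1:ℝ)/4)) t) := by
    have hsin := hasSum_nat_sinKernel ((1:ℝ)/4) ht
    have inj : Function.Injective (fun k : ℕ ↦ 2 * k + 1) := fun x y h ↦ by dsimp at h; omega
    have hzero : ∀ n : ℕ, n ∉ Set.range (fun k : ℕ ↦ 2 * k + 1) →
        2 * (n : ℝ) * Real.sin (2 * π * ((1:ℝ)/4) * n) * rexp (-π * (n : ℝ) ^ 2 * t) = 0 := by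
      intro n hn
      have he : Even n := by
        rcases Nat.even_or_odd n with h | h
        · exact h
        · exact absurd (by obtain ⟨j, hj⟩ := h; exact ⟨j, by dsimp; omega⟩) hn
      obtain ⟨j, rfl⟩ := he
      have h1 : 2 * π * ((1:ℝ)/4) * ((j + j : ℕ) : ℝ) = (j : ℝ) * π := by push_cast; ring
      rw [h1, Real.sin_nat_mul_pi]; ring
    have h := (inj.hasSum_iff hzero).2 hsin
    refine h.congr_fun fun k ↦ ?_
    show _ = 2 * ((2 * k + 1 : ℕ) : ℝ) * Real.sin (2 * π * ((1:ℝ)/4) * ((2 * k + 1 : ℕ) : ℝ)) *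
      rexp (-π * ((2 * k + 1 : ℕ) : ℝ) ^ 2 * t)
    have hs : Real.sin (2 * π * ((1:ℝ)/4) * ((2 * k + 1 : ℕ) : ℝ)) = (-1 : ℝ) ^ k := by
      have h1 : 2 * π * ((1:ℝ)/4) * ((2 * k + 1 : ℕ) : ℝ) = (k : ℝ) * π + π / 2 := by
        push_cast; ring
      rw [h1, Real.sin_add_pi_div_two]
      simpa using Real.cos_nat_mul_pi_sub 0 k
    rw [hs]
    have he : -π * ((2 * k + 1 : ℕ) : ℝ) ^ 2 * t =
        -((2 * (k : ℝ) + 1) ^ 2 * π ^ 2 * T / (8 * r ^ 2)) := by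
      rw [ht_def]; push_cast; ring
    rw [he]
    push_cast
    ring
  -- The right-hand side sum equals `4 * oddKernel (1/4) x`.
  have hO := hasSum_int_oddKernel ((1:ℝ)/4) hx
  have hexp : ∀ n : ℤ, -π * ((n : ℝ) + 1/4) ^ 2 * x =
      -(((2 * (n : ℝ) + 1) - 1/2) ^ 2 * 2 * r ^ 2 / T) := by
    intro n
    rw [hx_def]
    field_simp
    ring
  set g : ℤ → ℝ := fun m ↦ (-1 : ℝ) ^ (m + 1) * ((m : ℝ) - 1 / 2) *
        Real.exp (-(((m : ℝ) - 1 / 2) ^ 2 * 2 * r ^ 2 / T)) with hg_def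
  have ho : HasSum (fun n : ℤ ↦ g (2 * n + 1)) (2 * oddKernel (↑((1:ℝ)/4)) x) := by
    refine (hO.mul_left 2).congr_fun fun n ↦ ?_
    rw [hg_def]
    have hpow : (-1 : ℝ) ^ (2 * n + 1 + 1) = 1 := Even.neg_one_zpow ⟨n + 1, by ring⟩
    dsimp only
    rw [hpow]
    push_cast
    rw [← hexp n]
    ring
  have he : HasSum (fun n : ℤ ↦ g (2 * n)) (2 * oddKernel (↑((1:ℝ)/4)) x) := by
    have hneg : HasSum (fun n : ℤ ↦ g (2 * (-n))) (2 * oddKernel (↑((1:ℝ)/4)) x) := by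
      refine (hO.mul_left 2).congr_fun fun n ↦ ?_
      rw [hg_def]
      have hpow : (-1 : ℝ) ^ (2 * (-n) + 1) = -1 := Odd.neg_one_zpow ⟨-n, by ring⟩
      dsimp only
      rw [hpow]
      have harg : -((((2 * (-n) : ℤ) : ℝ) - 1/2) ^ 2 * 2 * r ^ 2 / T) =
          -π * ((n : ℝ) + 1/4) ^ 2 * x := by
        rw [hexp n]; push_cast; ring
      rw [harg]
      push_cast
      ring
    exact (Equiv.neg ℤ).hasSum_iff.1 hneg
  have hG : HasSum g (2 * oddKernel (↑((1:ℝ)/4)) x + 2 * oddKernel (↑((1:ℝ)/4)) x) :=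
    hasSum_int_even_add_odd he ho
  -- rewrite both `tsum`s
  have hLt : ∑' k : ℕ, (-1 : ℝ) ^ k * (2 * k + 1) *
      Real.exp (-((2 * k + 1) ^ 2 * π ^ 2 * T / (8 * r ^ 2))) =
      sinKernel (↑((1:ℝ)/4)) t / 2 := by
    have := (hL.div_const 2).congr_fun (g := fun k : ℕ ↦ (-1 : ℝ) ^ k * (2 * k + 1) *
      Real.exp (-((2 * k + 1) ^ 2 * π ^ 2 * T / (8 * r ^ 2)))) fun k ↦ by ring
    exact this.tsum_eq
  rw [hLt, hG.tsum_eq]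
  -- functional equation
  rw [oddKernel_functional_equation]
  have h1x : 1 / x = t := by
    rw [hx_def, ht_def]
    field_simp
  rw [h1x]
  -- final scalar computation
  have hA : x ^ ((3:ℝ)/2) = x * Real.sqrt x := by
    rw [show ((3:ℝ)/2) = 1 + 1/2 by norm_num, Real.rpow_add hx, Real.rpow_one,
      Real.sqrt_eq_rpow]
  have hsqx : Real.sqrt x = 2 * Real.sqrt 2 * r / Real.sqrt (π * T) := by
    have h1 : x = (2 * Real.sqrt 2 * r / Real.sqrt (π * T)) ^ 2 := by
      rw [div_pow, mul_pow, mul_pow, Real.sq_sqrt (by norm_num : (0:ℝ) ≤ 2),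
        Real.sq_sqrt hπT.le, hx_def]
      ring
    rw [h1, Real.sqrt_sq (by positivity)]
  have hs2 : Real.sqrt (π * T) ^ 2 = π * T := Real.sq_sqrt hπT.le
  have hc2 : Real.sqrt 2 ^ 2 = 2 := Real.sq_sqrt (by norm_num)
  have hsq2 : Real.sqrt (2 / (π * T)) = Real.sqrt 2 / Real.sqrt (π * T) :=
    Real.sqrt_div (by norm_num) _
  have hs0 : Real.sqrt (π * T) ≠ 0 := by positivity
  have hc0 : Real.sqrt 2 ≠ 0 := by positivity
  have hr0 : r ≠ 0 := hr.ne'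
  rw [hA, hsqx, hsq2, hx_def]
  set K := sinKernel (↑((1:ℝ)/4)) t
  field_simp
  nlinarith [hs2, hc2, sq_nonneg K]
end

section
/- Let T > 0 and p_R(r) = 2√(2/(πT)) ∑_{m=−∞}^{∞} (−1)^{m+1}(m − 1/2) exp(−(m − 1/2)² 2r²/T) for r > 0. Then p_R(r) ∼ 2√(2/(πT)) exp(−r²/(2T)) as r → +∞, and the integral ∫₀^{∞} r p_R(r) dr is finite. -/
/-!
With `c = r² / (2T)`, the summands `m` and `1 - m` of `p_R(r)` coincide, so
`p_R(r) = 2√(2/(πT)) S(c)` with `S(c) = ∑ₖ (-1)ᵏ (2k+1) e^{-(2k+1)² c}`.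
Since `e^c S(c) = ∑ₖ (-1)ᵏ (2k+1) e^{-4k(k+1)c}`, dominated convergence gives `e^c S(c) → 1`:
this is the asymptotics, and it makes `r p_R(r)` Gaussian-dominated at infinity.
Near `r = 0` the summands `k = 2n` and `k = 2n + 1` nearly cancel, their sum being `O(e^{-8cn²})`;
comparing with a Gaussian integral gives `S(c) = O(1 + c^{-1/2})`, so `r p_R(r)` stays bounded.
-/

open Real MeasureTheory Filter Set Topology

noncomputable section

def altOddTerm (c : ℝ) (k : ℕ) : ℝ :=
  (-1) ^ k * (2 * k + 1) * exp (-((2 * k + 1) ^ 2 * c))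

def altOddSum (c : ℝ) : ℝ := ∑' k, altOddTerm c k

end

lemma summable_two_mul_add_one_mul_exp_neg_mul {a : ℝ} (ha : 0 < a) :
    Summable fun k : ℕ => (2 * k + 1) * exp (-a * k) := by
  simpa [add_mul, mul_assoc] using
    ((summable_pow_mul_exp_neg_nat_mul 1 ha).mul_left 2).add (summable_pow_mul_exp_neg_nat_mul 0 ha)

lemma norm_altOddTerm_le {c₀ c : ℝ} (hc₀ : 0 ≤ c₀) (hc : c₀ ≤ c) (k : ℕ) :
    ‖altOddTerm c k‖ ≤ (2 * k + 1) * exp (-c₀ * k) := by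
  have hk : (k : ℝ) ≤ (2 * k + 1) ^ 2 := by nlinarith
  rw [altOddTerm, norm_mul, norm_mul, norm_pow, norm_neg, norm_one, one_pow, one_mul,
    Real.norm_of_nonneg (by positivity), Real.norm_of_nonneg (exp_pos _).le]
  gcongr
  nlinarith [mul_le_mul hk hc hc₀ (by positivity)]

lemma summable_altOddTerm {c : ℝ} (hc : 0 < c) : Summable (altOddTerm c) :=
  .of_norm_bounded (summable_two_mul_add_one_mul_exp_neg_mul hc) (norm_altOddTerm_le hc.le le_rfl)

lemma continuousOn_altOddSum : ContinuousOn altOddSum (Ioi 0) := by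
  intro c₀ (hc₀ : 0 < c₀)
  have : ContinuousOn altOddSum (Ici (c₀ / 2)) :=
    continuousOn_tsum (fun k => by unfold altOddTerm; fun_prop)
      (summable_two_mul_add_one_mul_exp_neg_mul (half_pos hc₀))
      fun k _ hc => norm_altOddTerm_le (half_pos hc₀).le hc k
  exact (this.continuousAt (Ici_mem_nhds (half_lt_self hc₀))).continuousWithinAt

lemma hasSum_int_altOddSum {c : ℝ} (hc : 0 < c) :
    HasSum (fun m : ℤ => (-1 : ℝ) ^ (m + 1) * (m - 1 / 2) * exp (-((2 * m - 1) ^ 2 * c)))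
      (altOddSum c) := by
  set f := fun m : ℤ => (-1 : ℝ) ^ (m + 1) * (m - 1 / 2) * exp (-((2 * m - 1) ^ 2 * c))
  have hpos (n : ℕ) : f (n + 1) = altOddTerm c n / 2 := by
    have hsign : (-1 : ℝ) ^ ((n : ℤ) + 1 + 1) = (-1) ^ n := by
      rw [add_assoc, zpow_add₀ (by norm_num), zpow_natCast]; norm_num
    simp only [f, altOddTerm, hsign]
    push_cast
    ring_nf
  have hneg (n : ℕ) : f (-(n + 1) + 1) = altOddTerm c n / 2 := by
    have hsign : (-1 : ℝ) ^ (-((n : ℤ) + 1) + 1 + 1) = -(-1) ^ n := by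
      rw [show -((n : ℤ) + 1) + 1 + 1 = -n + 1 by ring, zpow_add_one₀ (by norm_num), zpow_neg,
        zpow_natCast, ← inv_pow, inv_neg_one, mul_neg_one]
    simp only [f, altOddTerm, hsign]
    push_cast
    ring_nf
  have h := (summable_altOddTerm hc).hasSum.div_const 2
  have := HasSum.of_nat_of_neg_add_one (f := fun m => f (m + 1))
    (h.congr_fun hpos) (h.congr_fun hneg)
  rw [add_halves] at this
  exact (Equiv.addRight (1 : ℤ)).hasSum_iff.mp this

lemma tendsto_altOddSum_mul_exp : Tendsto (fun c => altOddSum c * exp c) atTop (𝓝 1) := by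
  have hterm (c : ℝ) (k : ℕ) :
      altOddTerm c k * exp c = (-1) ^ k * (2 * k + 1) * exp (-(4 * k * (k + 1) * c)) := by
    rw [altOddTerm, mul_assoc, ← exp_add]
    ring_nf
  have hlim (k : ℕ) :
      Tendsto (fun c => altOddTerm c k * exp c) atTop (𝓝 (if k = 0 then 1 else 0)) := by
    simp_rw [hterm]
    rcases Nat.eq_zero_or_pos k with rfl | hk
    · simp
    · have : Tendsto (fun c : ℝ => 4 * k * (k + 1) * c) atTop atTop :=
        tendsto_id.const_mul_atTop (by positivity)
      rw [if_neg hk.ne', ← mul_zero ((-1) ^ k * (2 * k + 1) : ℝ)]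
      exact (tendsto_exp_neg_atTop_nhds_zero.comp this).const_mul _
  have hbound : ∀ᶠ c in atTop, ∀ k : ℕ,
      ‖altOddTerm c k * exp c‖ ≤ (2 * k + 1) * exp (-4 * k) := by
    filter_upwards [eventually_ge_atTop 1] with c hc k
    rw [hterm, norm_mul, norm_mul, norm_pow, norm_neg, norm_one, one_pow, one_mul,
      Real.norm_of_nonneg (by positivity), Real.norm_of_nonneg (exp_pos _).le]
    gcongr
    nlinarith [(by positivity : (0 : ℝ) ≤ 4 * k * k)]
  have := tendsto_tsum_of_dominated_convergence
    (summable_two_mul_add_one_mul_exp_neg_mul four_pos) hlim hbound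
  rw [tsum_ite_eq] at this
  simpa only [altOddSum, tsum_mul_right] using this

lemma abs_mul_exp_neg_sq_sub_le {c x : ℝ} (hc : 0 ≤ c) (hx : 1 ≤ x) :
    |x * exp (-(x ^ 2 * c)) - (x + 2) * exp (-((x + 2) ^ 2 * c))| ≤
      18 * exp (-(x ^ 2 * c / 2)) := by
  -- Factor out `e^{-x²c}`: the rest is `O(x²c + 1)` since `1 - e^{-t} ≤ t`, and `u e^{-u} ≤ 1`.
  have hu : 0 ≤ x ^ 2 * c / 2 := by positivity
  have hsq : exp (-(x ^ 2 * c)) = exp (-(x ^ 2 * c / 2)) ^ 2 := by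
    rw [← exp_nat_mul]; congr 1; push_cast; ring
  have hsplit : exp (-((x + 2) ^ 2 * c)) =
      exp (-(x ^ 2 * c / 2)) ^ 2 * exp (-((4 * x + 4) * c)) := by
    rw [← hsq, ← exp_add]; ring_nf
  have hb : exp (-(x ^ 2 * c / 2)) ≤ 1 := exp_le_one_iff.mpr (by linarith)
  have hub : x ^ 2 * c / 2 * exp (-(x ^ 2 * c / 2)) ≤ 1 :=
    (mul_exp_neg_le_exp_neg_one _).trans (exp_le_one_iff.mpr (by norm_num))
  have hy : 1 - (4 * x + 4) * c ≤ exp (-((4 * x + 4) * c)) := by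
    linarith [add_one_le_exp (-((4 * x + 4) * c))]
  have hy1 : exp (-((4 * x + 4) * c)) ≤ 1 := exp_le_one_iff.mpr (by nlinarith)
  have hy0 := (exp_pos (-((4 * x + 4) * c))).le
  have hb0 := (exp_pos (-(x ^ 2 * c / 2))).le
  rw [hsq, hsplit]
  generalize exp (-(x ^ 2 * c / 2)) = b at *
  generalize exp (-((4 * x + 4) * c)) = y at *
  have hx2 : x * c ≤ x ^ 2 * c := mul_le_mul_of_nonneg_right (by nlinarith) hc
  have hdiff : |x - (x + 2) * y| ≤ 8 * x ^ 2 * c + 2 :=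
    abs_le.mpr ⟨by nlinarith [mul_nonneg hc (sq_nonneg x)],
      by nlinarith [mul_le_mul_of_nonneg_left hy (by linarith : 0 ≤ x)]⟩
  calc |x * b ^ 2 - (x + 2) * (b ^ 2 * y)| = b ^ 2 * |x - (x + 2) * y| := by
        rw [← abs_of_nonneg (sq_nonneg b), ← abs_mul, abs_of_nonneg (sq_nonneg b)]; ring_nf
    _ ≤ b ^ 2 * (8 * x ^ 2 * c + 2) := by gcongr
    _ = b * (16 * (x ^ 2 * c / 2 * b) + 2 * b) := by ring
    _ ≤ b * (16 * 1 + 2 * 1) := by gcongr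
    _ = 18 * b := by ring

lemma abs_altOddTerm_pair_le {c : ℝ} (hc : 0 ≤ c) (n : ℕ) :
    |altOddTerm c (2 * n) + altOddTerm c (2 * n + 1)| ≤ 18 * exp (-(8 * c) * n ^ 2) := by
  have hpair : altOddTerm c (2 * n) + altOddTerm c (2 * n + 1) =
      (4 * n + 1) * exp (-((4 * n + 1) ^ 2 * c)) -
        (4 * n + 1 + 2) * exp (-((4 * n + 1 + 2) ^ 2 * c)) := by
    simp only [altOddTerm, pow_succ, pow_mul]
    push_cast
    ring_nf
  rw [hpair]
  refine (abs_mul_exp_neg_sq_sub_le hc (by linarith [n.cast_nonneg (α := ℝ)])).trans ?_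
  gcongr
  nlinarith [n.cast_nonneg (α := ℝ)]

lemma antitoneOn_exp_neg_mul_sq {a : ℝ} (ha : 0 ≤ a) :
    AntitoneOn (fun x : ℝ => exp (-a * x ^ 2)) (Ici 0) := fun x (hx : 0 ≤ x) y _ hxy =>
  exp_le_exp.mpr (by nlinarith [mul_le_mul hxy hxy hx (hx.trans hxy)])

lemma summable_exp_neg_mul_nat_sq {a : ℝ} (ha : 0 < a) :
    Summable fun n : ℕ => exp (-a * n ^ 2) :=
  (antitoneOn_exp_neg_mul_sq ha.le).summable_of_integrableOn_Ioi_zero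
    (integrable_exp_neg_mul_sq ha).integrableOn fun _ _ => (exp_pos _).le

lemma tsum_exp_neg_mul_nat_sq_le {a : ℝ} (ha : 0 < a) :
    ∑' n : ℕ, exp (-a * n ^ 2) ≤ 1 + √(π / a) / 2 := by
  convert (antitoneOn_exp_neg_mul_sq ha.le).tsum_le_integral
    (integrable_exp_neg_mul_sq ha).integrableOn fun _ _ => (exp_pos _).le using 2
  · simp
  · exact (integral_gaussian_Ioi a).symm

lemma abs_altOddSum_le {c : ℝ} (hc : 0 < c) : |altOddSum c| ≤ 18 * (1 + √(π / (8 * c)) / 2) := by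
  have heven : Summable fun n : ℕ => altOddTerm c (2 * n) :=
    (summable_altOddTerm hc).comp_injective (mul_right_injective₀ two_ne_zero)
  have hodd : Summable fun n : ℕ => altOddTerm c (2 * n + 1) :=
    (summable_altOddTerm hc).comp_injective
    ((add_left_injective 1).comp (mul_right_injective₀ (two_ne_zero' ℕ)))
  have h8c : 0 < 8 * c := by positivity
  calc |altOddSum c| = ‖∑' n : ℕ, (altOddTerm c (2 * n) + altOddTerm c (2 * n + 1))‖ := by
        rw [altOddSum, ← tsum_even_add_odd heven hodd, ← heven.tsum_add hodd, Real.norm_eq_abs]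
    _ ≤ ∑' n : ℕ, |altOddTerm c (2 * n) + altOddTerm c (2 * n + 1)| :=
        norm_tsum_le_tsum_norm (heven.add hodd).norm
    _ ≤ ∑' n : ℕ, 18 * exp (-(8 * c) * n ^ 2) :=
        (heven.add hodd).abs.tsum_le_tsum (abs_altOddTerm_pair_le hc.le)
          ((summable_exp_neg_mul_nat_sq h8c).mul_left 18)
    _ ≤ 18 * (1 + √(π / (8 * c)) / 2) := by
        rw [tsum_mul_left]; gcongr; exact tsum_exp_neg_mul_nat_sq_le h8c

lemma abs_mul_altOddSum_sq_div_le {T r : ℝ} (hT : 0 < T) (hr : 0 < r) :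
    |r * altOddSum (r ^ 2 / (2 * T))| ≤ 18 * r + 9 * √(π * T / 4) := by
  have hsqrt : r * √(π / (8 * (r ^ 2 / (2 * T)))) = √(π * T / 4) := by
    rw [← sqrt_sq hr.le, ← sqrt_mul (sq_nonneg r), sqrt_sq hr.le]
    congr 1
    field_simp
    ring
  calc |r * altOddSum (r ^ 2 / (2 * T))| = r * |altOddSum (r ^ 2 / (2 * T))| := by
        rw [abs_mul, abs_of_pos hr]
    _ ≤ r * (18 * (1 + √(π / (8 * (r ^ 2 / (2 * T)))) / 2)) := by
        gcongr; exact abs_altOddSum_le (by positivity)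
    _ = 18 * r + 9 * √(π * T / 4) := by rw [← hsqrt]; ring

lemma eventually_abs_altOddSum_le : ∀ᶠ c in atTop, |altOddSum c| ≤ 2 * exp (-c) := by
  filter_upwards [tendsto_altOddSum_mul_exp.abs.eventually_lt_const (by norm_num : |(1 : ℝ)| < 2)]
    with c hc
  rw [abs_mul, abs_of_pos (exp_pos c)] at hc
  calc |altOddSum c| = |altOddSum c| * exp c * exp (-c) := by
        rw [mul_assoc, ← exp_add, add_neg_cancel, exp_zero, mul_one]
    _ ≤ 2 * exp (-c) := by gcongr

lemma tendsto_sq_div_const_atTop {a : ℝ} (ha : 0 < a) :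
    Tendsto (fun r : ℝ => r ^ 2 / a) atTop atTop :=
  (tendsto_pow_atTop two_ne_zero).atTop_div_const ha

lemma integrableOn_mul_altOddSum_sq_div {T : ℝ} (hT : 0 < T) :
    IntegrableOn (fun r => r * altOddSum (r ^ 2 / (2 * T))) (Ioi 0) := by
  set F := fun r => r * altOddSum (r ^ 2 / (2 * T))
  have hcont : ContinuousOn F (Ioi 0) :=
    continuousOn_id.mul (continuousOn_altOddSum.comp (by fun_prop) fun r (hr : 0 < r) =>
      show 0 < r ^ 2 / (2 * T) by positivity)
  obtain ⟨R, hR⟩ := eventually_atTop.mp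
    ((tendsto_sq_div_const_atTop (by positivity : 0 < 2 * T)).eventually
      eventually_abs_altOddSum_le)
  set R₀ := max R 1
  have hR₀ : 0 < R₀ := zero_lt_one.trans_le (le_max_right _ _)
  have hsmall : IntegrableOn F (Ioc 0 R₀) := by
    refine Integrable.mono' (integrableOn_const (C := 18 * R₀ + 9 * √(π * T / 4))
      measure_Ioc_lt_top.ne) ((hcont.mono Ioc_subset_Ioi_self).aestronglyMeasurable
        measurableSet_Ioc) ?_
    rw [ae_restrict_iff' measurableSet_Ioc]
    exact ae_of_all _ fun r hr =>
      (abs_mul_altOddSum_sq_div_le hT hr.1).trans (by linarith [hr.2])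
  have hlarge : IntegrableOn F (Ioi R₀) := by
    have hgauss := integrable_mul_exp_neg_mul_sq (b := 1 / (2 * T)) (by positivity)
    refine Integrable.mono' (hgauss.const_mul 2).integrableOn
      ((hcont.mono (Ioi_subset_Ioi hR₀.le)).aestronglyMeasurable measurableSet_Ioi) ?_
    rw [ae_restrict_iff' measurableSet_Ioi]
    refine ae_of_all _ fun r (hr : R₀ < r) => ?_
    have hr0 : 0 < r := hR₀.trans hr
    calc ‖F r‖ = r * |altOddSum (r ^ 2 / (2 * T))| := by
          rw [Real.norm_eq_abs, abs_mul, abs_of_pos hr0]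
      _ ≤ r * (2 * exp (-(r ^ 2 / (2 * T)))) := by
          gcongr; exact hR r ((le_max_left _ _).trans hr.le)
      _ = 2 * (r * exp (-(1 / (2 * T)) * r ^ 2)) := by ring_nf
  rw [← Ioc_union_Ioi_eq_Ioi hR₀.le]
  exact hsmall.union hlarge

/-- Large-`r` asymptotics of `p_R` and integrability of `r ↦ r p_R(r)`. -/
theorem stmt16 (T : ℝ) (hT : 0 < T)
    (pR : ℝ → ℝ)
    (hpR : ∀ r : ℝ, 0 < r → pR r = 2 * Real.sqrt (2 / (π * T)) *
      ∑' m : ℤ, (-1 : ℝ) ^ (m + 1) * ((m : ℝ) - 1 / 2) *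
        Real.exp (-(((m : ℝ) - 1 / 2) ^ 2 * 2 * r ^ 2 / T))) :
    Tendsto (fun r : ℝ =>
        pR r / (2 * Real.sqrt (2 / (π * T)) * Real.exp (-(r ^ 2 / (2 * T)))))
      atTop (nhds 1) ∧
    IntegrableOn (fun r : ℝ => r * pR r) (Set.Ioi 0) := by
  set C := 2 * √(2 / (π * T))
  have hC : C ≠ 0 := by positivity
  have hpR_eq (r : ℝ) (hr : 0 < r) : pR r = C * altOddSum (r ^ 2 / (2 * T)) := by
    rw [hpR r hr, ← (hasSum_int_altOddSum (by positivity)).tsum_eq]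
    congr! 4 with m
    field_simp
  constructor
  · refine (tendsto_altOddSum_mul_exp.comp
      (tendsto_sq_div_const_atTop (by positivity : 0 < 2 * T))).congr' ?_
    filter_upwards [eventually_gt_atTop 0] with r hr
    rw [Function.comp_apply, hpR_eq r hr, exp_neg]
    field_simp
  · refine IntegrableOn.congr_fun ((integrableOn_mul_altOddSum_sq_div hT).const_mul C)
      (fun r hr => ?_) measurableSet_Ioi
    rw [hpR_eq r hr, mul_left_comm]
end
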